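/- arXiv:2403.04221 — 3 statements merged into one kernel-verified Lean document; each statement's English description precedes it below -/
import Mathlib

section
/- Let D be an action-minimal dynamic decision network (satisfying faithfulness in the sense that no parent of the action variable can be made independent of the action by conditioning on other variables). Then a set O of observable variables is action sufficient in D if and only if the network policy π^D is executable given O, i.e., the action is conditionally independent of the latent state variables given the observed variables. -/
open Finset

-- Probability of an event under a distribution on joint assignments.
open Classical in
noncomputable def prE {ι : Type*} [Fintype ι] [DecidableEq ι] {Val : ι → Type*}
    [∀ i, Fintype (Val i)]
    (P : (∀ i, Val i) → ℝ) (E : (∀ i, Val i) → Prop) : ℝ :=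
  ∑ v : ∀ i, Val i, if E v then P v else 0

/-- `v` agrees with the reference assignment `x` on the variables in `S`. -/
def Agrees {ι : Type*} {Val : ι → Type*} (S : Finset ι) (x v : ∀ i, Val i) : Prop :=
  ∀ j ∈ S, v j = x j

/-- Conditional independence of `S` and `T` given `C` under `P`. -/
def CondIndep {ι : Type*} [Fintype ι] [DecidableEq ι] (Val : ι → Type*)
    [∀ i, Fintype (Val i)]
    (P : (∀ i, Val i) → ℝ) (S T C : Finset ι) : Prop :=
  ∀ x : ∀ i, Val i,
    prE P (Agrees (S ∪ T ∪ C) x) * prE P (Agrees C x)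
      = prE P (Agrees (S ∪ C) x) * prE P (Agrees (T ∪ C) x)

/-! If every parent of `A` other than `B` is observed, each latent slice-0 variable is neither a
parent nor a descendant of `A` (the only slice-0 descendant of `A` is `R`), so the local Markov
property at `A` followed by weak union gives `A ⊥ latents | B ∪ O`. Conversely, an unobserved
parent `X` of `A` is latent, and decomposition of `A ⊥ latents | B ∪ O` gives `A ⊥ X | B ∪ O`,
which action-minimality forbids. -/

section CondIndep

open Classical

variable {ι : Type*} [Fintype ι] [DecidableEq ι] {Val : ι → Type*} [∀ i, Fintype (Val i)]
  {P : (∀ i, Val i) → ℝ}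

lemma prE_agrees_anti (hP : ∀ v, 0 ≤ P v) {S S' : Finset ι} (h : S ⊆ S') (x : ∀ i, Val i) :
    prE P (Agrees S' x) ≤ prE P (Agrees S x) :=
  sum_le_sum fun v _ => by
    by_cases hv : Agrees S' x v
    · rw [if_pos hv, if_pos (show Agrees S x v from fun j hj => hv j (h hj))]
    · rw [if_neg hv]
      split_ifs <;> simp [hP v]

lemma prE_agrees_eq_zero_of_subset (hP : ∀ v, 0 ≤ P v) {S S' : Finset ι} (h : S ⊆ S')
    {x : ∀ i, Val i} (hS : prE P (Agrees S x) = 0) : prE P (Agrees S' x) = 0 :=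
  le_antisymm (hS ▸ prE_agrees_anti hP h x)
    (sum_nonneg fun v _ => by split_ifs <;> simp [hP v])

lemma prE_agrees_congr {S : Finset ι} {x x' : ∀ i, Val i} (h : ∀ j ∈ S, x' j = x j) :
    prE P (Agrees S x') = prE P (Agrees S x) := by
  have hS : Agrees S x' = Agrees S x :=
    funext fun v => propext (forall₂_congr fun j hj => by rw [h j hj])
  rw [hS]

lemma sum_prE_agrees_union {W U : Finset ι} (hWU : Disjoint W U) (x : ∀ i, Val i) :
    ∑ x' with ∀ j ∉ U, x' j = x j, prE P (Agrees (W ∪ U) x') = prE P (Agrees W x) := by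
  unfold prE
  rw [sum_comm]
  refine sum_congr rfl fun v _ => ?_
  have key : ∀ x', ((∀ j ∉ U, x' j = x j) ∧ Agrees (W ∪ U) x' v) ↔
      (U.piecewise v x = x' ∧ Agrees W x v) := by
    intro x'
    constructor
    · rintro ⟨hout, hag⟩
      refine ⟨funext fun j => ?_, fun j hj => ?_⟩
      · by_cases hj : j ∈ U
        · simp [hj, hag j (mem_union_right _ hj)]
        · simp [hj, hout j hj]
      · rw [hag j (mem_union_left _ hj), hout j (disjoint_left.mp hWU hj)]
    · rintro ⟨rfl, hW⟩
      refine ⟨fun j hj => piecewise_eq_of_notMem _ _ _ hj, fun j hj => ?_⟩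
      by_cases hjU : j ∈ U
      · simp [hjU]
      · simp [hjU, hW j ((mem_union.mp hj).resolve_right hjU)]
  rw [sum_filter]
  calc _ = ∑ x', if U.piecewise v x = x' ∧ Agrees W x v then P v else 0 :=
        sum_congr rfl fun x' _ => by rw [← ite_and]; exact if_congr (key x') rfl rfl
    _ = _ := by simp [ite_and]

lemma CondIndep.of_union_right {S T U C : Finset ι} (hU : Disjoint U (S ∪ T ∪ C))
    (h : CondIndep Val P S (T ∪ U) C) : CondIndep Val P S T C := by
  intro x
  have hfix : ∀ W : Finset ι, Disjoint W U → ∀ x' ∈ univ.filter (fun x' => ∀ j ∉ U, x' j = x j),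
      prE P (Agrees W x') = prE P (Agrees W x) := fun W hW x' hx' =>
    prE_agrees_congr fun j hj => (mem_filter.mp hx').2 j (disjoint_left.mp hW hj)
  have hSC : Disjoint (S ∪ C) U := (hU.mono_right (union_subset_union_left subset_union_left)).symm
  have hTC : Disjoint (T ∪ C) U := (hU.mono_right (union_subset_union_left subset_union_right)).symm
  have hC : Disjoint C U := disjoint_of_subset_left subset_union_right hSC
  -- sum the hypothesis over all `x'` that agree with `x` off `U`, marginalising `U` out
  calc prE P (Agrees (S ∪ T ∪ C) x) * prE P (Agrees C x)
      = ∑ x' with ∀ j ∉ U, x' j = x j,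
          prE P (Agrees (S ∪ (T ∪ U) ∪ C) x') * prE P (Agrees C x') := by
        rw [← sum_prE_agrees_union hU.symm, sum_mul]
        refine sum_congr rfl fun x' hx' => ?_
        rw [hfix C hC x' hx', show S ∪ (T ∪ U) ∪ C = S ∪ T ∪ C ∪ U by ac_rfl]
    _ = ∑ x' with ∀ j ∉ U, x' j = x j,
          prE P (Agrees (S ∪ C) x') * prE P (Agrees (T ∪ U ∪ C) x') :=
        sum_congr rfl fun x' _ => h x'
    _ = prE P (Agrees (S ∪ C) x) * prE P (Agrees (T ∪ C) x) := by
        rw [← sum_prE_agrees_union hTC, mul_sum]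
        refine sum_congr rfl fun x' hx' => ?_
        rw [hfix (S ∪ C) hSC x' hx', show T ∪ U ∪ C = T ∪ C ∪ U by ac_rfl]

lemma CondIndep.weak_union (hP : ∀ v, 0 ≤ P v) {S T W Z : Finset ι}
    (hT : Disjoint T (S ∪ W ∪ Z)) (h : CondIndep Val P S (T ∪ W) Z) :
    CondIndep Val P S T (W ∪ Z) := by
  have hW : CondIndep Val P S W Z := by
    rw [union_comm] at h
    exact h.of_union_right hT
  intro x
  have h₁ := h x
  have h₂ := hW x
  simp only [union_assoc] at h₁ h₂ ⊢
  by_cases hZ : prE P (Agrees Z x) = 0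
  · rw [prE_agrees_eq_zero_of_subset hP subset_union_right hZ,
      prE_agrees_eq_zero_of_subset hP (subset_union_right.trans subset_union_right) hZ,
      mul_zero, zero_mul]
  · apply mul_left_cancel₀ hZ
    linear_combination prE P (Agrees (W ∪ Z) x) * h₁ - prE P (Agrees (T ∪ (W ∪ Z)) x) * h₂

lemma CondIndep.of_union_sdiff (hP : ∀ v, 0 ≤ P v) {S T C Z : Finset ι} (hZC : Z ⊆ C)
    (hT : Disjoint T (S ∪ C)) (h : CondIndep Val P S ((T ∪ C) \ Z) Z) : CondIndep Val P S T C := by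
  have hTZ : Disjoint T Z := hT.mono_right (hZC.trans subset_union_right)
  rw [union_sdiff_distrib, hTZ.sdiff_eq_left] at h
  have := h.weak_union hP (by rwa [union_assoc, sdiff_union_of_subset hZC])
  rwa [sdiff_union_of_subset hZC] at this

lemma CondIndep.singleton_of_mem {S T C : Finset ι} {X : ι} (hX : X ∈ T)
    (hT : Disjoint T (S ∪ C)) (h : CondIndep Val P S T C) : CondIndep Val P S {X} C := by
  rw [← insert_erase hX, insert_eq] at h
  refine h.of_union_right ?_
  rw [union_right_comm]
  exact disjoint_union_right.mpr
    ⟨hT.mono_left (erase_subset X T), disjoint_singleton_right.mpr (notMem_erase X T)⟩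

end CondIndep

lemma slice_eq_one_or_eq_of_transGen {ι : Type*} {pa : ι → Finset ι} {slice : ι → Fin 2}
    {A R j : ι} (htime : ∀ i j : ι, i ∈ pa j → ¬ (slice i = 1 ∧ slice j = 0))
    (hR : ∀ j : ι, R ∈ pa j → slice j = 1) (hA : ∀ j : ι, A ∈ pa j → slice j = 0 → j = R)
    (hj : Relation.TransGen (fun u w => u ∈ pa w) A j) : slice j = 1 ∨ j = R := by
  induction hj with
  | @single b hAb =>
    by_cases hb : slice b = 0
    · exact .inr (hA b hAb hb)
    · exact .inl (by omega)
  | tail _ hbc ih =>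
    rcases ih with hb | rfl
    · exact .inl (by have := htime _ _ hbc; omega)
    · exact .inl (hR _ hbc)

theorem ddn_action_sufficient_iff_executable_general
    {ι : Type*} [Fintype ι] [DecidableEq ι]
    (Val : ι → Type*) [∀ i, Fintype (Val i)]
    (pa : ι → Finset ι) (slice : ι → Fin 2)
    (A R B : ι) (O : Finset ι)
    (P : (∀ i, Val i) → ℝ)
    (hPnonneg : ∀ v, 0 ≤ P v)
    -- local Markov condition
    (hMarkov : ∀ i : ι, ∀ T : Finset ι,
        (∀ j ∈ T, j ≠ i ∧ j ∉ pa i ∧ ¬ Relation.TransGen (fun u w => u ∈ pa w) i j) →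
        CondIndep Val P {i} T (pa i))
    -- structural DDN assumptions
    (htime : ∀ i j : ι, i ∈ pa j → ¬ (slice i = 1 ∧ slice j = 0))
    (hR : ∀ j : ι, R ∈ pa j → slice j = 1)
    (hA : ∀ j : ι, A ∈ pa j → slice j = 0 → j = R)
    (hRA : R ∉ pa A)
    (hsliceA : slice A = 0) (hsliceB : slice B = 0)
    (hAR : A ≠ R) (hBA : B ≠ A) (hBR : B ≠ R)
    (hO : ∀ j ∈ O, slice j = 0 ∧ j ≠ A ∧ j ≠ R ∧ j ≠ B)
    -- action-minimality (faithfulness for the action variable): no parent of A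
    -- can be made independent of A by conditioning on other variables
    (hmin : ∀ X ∈ pa A, ∀ U : Finset ι, A ∉ U → X ∉ U → ¬ CondIndep Val P {A} {X} U) :
    pa A ⊆ insert B O ↔
      CondIndep Val P {A}
        (Finset.univ.filter fun j => slice j = 0 ∧ j ∉ O ∧ j ≠ A ∧ j ≠ R ∧ j ≠ B)
        (insert B O) := by
  set C := insert B O
  set L := Finset.univ.filter fun j => slice j = 0 ∧ j ∉ O ∧ j ≠ A ∧ j ≠ R ∧ j ≠ B
  have hV : ∀ j ∈ L ∪ C, slice j = 0 ∧ j ≠ A ∧ j ≠ R := by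
    intro j hj
    simp only [L, C, mem_union, mem_filter, mem_univ, true_and, mem_insert] at hj
    rcases hj with ⟨hj0, -, hjA, hjR, -⟩ | rfl | hjO
    exacts [⟨hj0, hjA, hjR⟩, ⟨hsliceB, hBA, hBR⟩, ⟨(hO j hjO).1, (hO j hjO).2.1, (hO j hjO).2.2.1⟩]
  have hLAC : Disjoint L ({A} ∪ C) := by simp +contextual [L, C, disjoint_left]
  constructor
  · intro hsub
    refine (hMarkov A _ fun j hj => ?_).of_union_sdiff hPnonneg hsub hLAC
    obtain ⟨hjV, hjpa⟩ := mem_sdiff.mp hj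
    obtain ⟨hj0, hjA, hjR⟩ := hV j hjV
    exact ⟨hjA, hjpa, fun h =>
      hjR ((slice_eq_one_or_eq_of_transGen htime hR hA h).resolve_left (by simp [hj0]))⟩
  · intro hCI X hX
    by_contra hXC
    have hXL : X ∈ L := by
      have hX0 : slice X = 0 := by have := htime X A hX; omega
      simp only [L, mem_filter, mem_univ, true_and]
      exact ⟨hX0, fun h => hXC (mem_insert_of_mem h), fun h => hAR (hA A (h ▸ hX) hsliceA),
        fun h => hRA (h ▸ hX), fun h => hXC (h ▸ mem_insert_self B O)⟩
    exact hmin X hX C (fun hAC => (hV A (mem_union_right L hAC)).2.1 rfl) hXC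
      (hCI.singleton_of_mem hXL hLAC)

/-- for an action-minimal dynamic decision network, a set `O` of
observable variables is action sufficient (all parents of the action `A`
other than the belief `B` are in `O`) **iff** the network policy is executable
given `O`, i.e. the action is conditionally independent of the contemporaneous
latent state variables given the observables (together with `B`). -/
theorem ddn_action_sufficient_iff_executable
    {ι : Type*} [Fintype ι] [DecidableEq ι]
    (Val : ι → Type*) [∀ i, Fintype (Val i)]
    (pa : ι → Finset ι) (slice : ι → Fin 2)
    (A R B : ι) (O : Finset ι)
    (P : (∀ i, Val i) → ℝ)
    (hPnonneg : ∀ v, 0 ≤ P v)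
    -- local Markov condition
    (hMarkov : ∀ i : ι, ∀ T : Finset ι,
        (∀ j ∈ T, j ≠ i ∧ j ∉ pa i ∧ ¬ Relation.TransGen (fun u w => u ∈ pa w) i j) →
        CondIndep Val P {i} T (pa i))
    -- structural DDN assumptions
    (htime : ∀ i j : ι, i ∈ pa j → ¬ (slice i = 1 ∧ slice j = 0))
    (hR : ∀ j : ι, R ∈ pa j → slice j = 1)
    (hA : ∀ j : ι, A ∈ pa j → slice j = 0 → j = R)
    (hRA : R ∉ pa A)
    (hsliceA : slice A = 0) (hsliceR : slice R = 0) (hsliceB : slice B = 0)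
    (hAR : A ≠ R) (hBA : B ≠ A) (hBR : B ≠ R)
    (hO : ∀ j ∈ O, slice j = 0 ∧ j ≠ A ∧ j ≠ R ∧ j ≠ B)
    -- action-minimality (faithfulness for the action variable): no parent of A
    -- can be made independent of A by conditioning on other variables
    (hmin : ∀ X ∈ pa A, ∀ U : Finset ι, A ∉ U → X ∉ U → ¬ CondIndep Val P {A} {X} U) :
    pa A ⊆ insert B O ↔
      CondIndep Val P {A}
        (Finset.univ.filter fun j => slice j = 0 ∧ j ∉ O ∧ j ≠ A ∧ j ≠ R ∧ j ≠ B)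
        (insert B O) :=
  ddn_action_sufficient_iff_executable_general Val pa slice A R B O P hPnonneg hMarkov htime hR hA
    hRA hsliceA hsliceB hAR hBA hBR hO hmin
end

section
/- Suppose an observation signal O is action sufficient in a dynamic decision network D. Then the conditional reward model equals the interventional reward model, P_D(R | O, A=â) = P_D(R | O, do(A=â)), and the conditional transition model equals the interventional transition model, P_D(S' | O, A=â) = P_D(S' | O, do(A=â)), for all â with positive conditional probability. -/
open Finset

/-- Joint distribution of a (dynamic decision network, viewed as a) causal
Bayesian network. -/
noncomputable def bnJoint {ι : Type*} [Fintype ι] {Val : ι → Type*}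
    (cpt : ∀ i, (∀ j, Val j) → Val i → ℝ) (v : ∀ i, Val i) : ℝ :=
  ∏ i, cpt i v (v i)

/-- Truncated (interventional) distribution `P_{do(A=â)}`. -/
noncomputable def bnDoJoint {ι : Type*} [Fintype ι] [DecidableEq ι] {Val : ι → Type*}
    [∀ i, DecidableEq (Val i)]
    (cpt : ∀ i, (∀ j, Val j) → Val i → ℝ) (A : ι) (ahat : Val A)
    (v : ∀ i, Val i) : ℝ :=
  (∏ i ∈ Finset.univ.erase A, cpt i v (v i)) * (if v A = ahat then 1 else 0)

-- Probability of an event (latent variables marginalized by summing over all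
-- joint assignments).
open Classical in
noncomputable def prEvent {ι : Type*} [Fintype ι] [DecidableEq ι] {Val : ι → Type*}
    [∀ i, Fintype (Val i)]
    (P : (∀ i, Val i) → ℝ) (E : (∀ i, Val i) → Prop) : ℝ :=
  ∑ v : ∀ i, Val i, if E v then P v else 0

/-- Conditional probability as a ratio of event probabilities. -/
noncomputable def condPr {ι : Type*} [Fintype ι] [DecidableEq ι] {Val : ι → Type*}
    [∀ i, Fintype (Val i)]
    (P : (∀ i, Val i) → ℝ) (E F : (∀ i, Val i) → Prop) : ℝ :=
  prEvent P (fun v => E v ∧ F v) / prEvent P F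

/-!
On the event that `v` agrees with `x` on a superset of the parents of `A`, the factor of `A` in
the joint distribution is the constant `cpt A x â` once `v A = â`. Hence the joint probability of
any such event together with `A = â` is that constant times its probability under `do(A = â)`,
and the constant cancels in the ratio defining the conditional probability.
-/

section Truncation

variable {ι : Type*} [Fintype ι] [DecidableEq ι] {Val : ι → Type*}

theorem prEvent_congr [∀ i, Fintype (Val i)] (P : (∀ i, Val i) → ℝ)
    {E F : (∀ i, Val i) → Prop} (h : ∀ v, E v ↔ F v) : prEvent P E = prEvent P F :=
  congrArg (prEvent P) (funext fun v => propext (h v))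

variable [∀ i, DecidableEq (Val i)] (cpt : ∀ i, (∀ j, Val j) → Val i → ℝ) {A : ι} {ahat : Val A}

theorem bnJoint_eq_mul_bnDoJoint {v : ∀ i, Val i} (ha : v A = ahat) :
    bnJoint cpt v = cpt A v ahat * bnDoJoint cpt A ahat v := by
  rw [bnJoint, bnDoJoint, if_pos ha, mul_one, ← mul_prod_erase univ _ (mem_univ A), ha]

theorem bnDoJoint_of_ne {v : ∀ i, Val i} (ha : v A ≠ ahat) : bnDoJoint cpt A ahat v = 0 := by
  rw [bnDoJoint, if_neg ha, mul_zero]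

variable [∀ i, Fintype (Val i)] {paA : Finset ι} {S : Finset ι} {x : ∀ i, Val i}

theorem prEvent_bnJoint_and_eq_mul_prEvent_bnDoJoint
    (hlocal : ∀ v w : ∀ j, Val j, (∀ j ∈ paA, v j = w j) → cpt A v = cpt A w) (hpa : paA ⊆ S)
    {G : (∀ i, Val i) → Prop} (hG : ∀ v, G v → Agrees S x v) :
    prEvent (bnJoint cpt) (fun v => G v ∧ v A = ahat)
      = cpt A x ahat * prEvent (bnDoJoint cpt A ahat) G := by
  rw [prEvent, prEvent, mul_sum]
  refine sum_congr rfl fun v _ => ?_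
  by_cases hg : G v
  · by_cases ha : v A = ahat
    · have hcpt : cpt A v = cpt A x := hlocal v x fun j hj => hG v hg j (hpa hj)
      rw [if_pos ⟨hg, ha⟩, if_pos hg, bnJoint_eq_mul_bnDoJoint cpt ha, hcpt]
    · rw [if_neg fun h => ha h.2, if_pos hg, bnDoJoint_of_ne cpt ha, mul_zero]
  · rw [if_neg fun h => hg h.1, if_neg hg, mul_zero]

theorem condPr_bnDoJoint_eq_condPr_bnJoint
    (hlocal : ∀ v w : ∀ j, Val j, (∀ j ∈ paA, v j = w j) → cpt A v = cpt A w) (hpa : paA ⊆ S)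
    (hpos : prEvent (bnJoint cpt) (fun v => Agrees S x v ∧ v A = ahat) ≠ 0)
    (E : (∀ i, Val i) → Prop) :
    condPr (bnDoJoint cpt A ahat) E (Agrees S x)
      = condPr (bnJoint cpt) E (fun v => Agrees S x v ∧ v A = ahat) := by
  have hjoint := prEvent_bnJoint_and_eq_mul_prEvent_bnDoJoint cpt (ahat := ahat) hlocal hpa
    (G := fun v => E v ∧ Agrees S x v) fun _ h => h.2
  have hmarg := prEvent_bnJoint_and_eq_mul_prEvent_bnDoJoint cpt (ahat := ahat) hlocal hpa
    (G := Agrees S x) fun _ h => h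
  have hc : cpt A x ahat ≠ 0 := by
    intro h
    rw [hmarg, h, zero_mul] at hpos
    exact hpos rfl
  rw [condPr, condPr, prEvent_congr _ fun v => and_assoc.symm, hjoint, hmarg,
    mul_div_mul_left _ _ hc]

end Truncation

theorem ddn_reward_transition_obs_eq_do_general
    {ι : Type*} [Fintype ι] [DecidableEq ι]
    (Val : ι → Type*) [∀ i, Fintype (Val i)] [∀ i, DecidableEq (Val i)]
    (pa : ι → Finset ι)
    (cpt : ∀ i, (∀ j, Val j) → Val i → ℝ)
    (hlocal : ∀ i (v w : ∀ j, Val j), (∀ j ∈ pa i, v j = w j) → cpt i v = cpt i w)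
    (A R B : ι) (O S' : Finset ι)
    -- action sufficiency: all parents of A lie in O ∪ {B}
    (hActionSufficient : pa A ⊆ insert B O)
    (x : ∀ i, Val i) (ahat : Val A)
    (hpos : 0 < prEvent (bnJoint cpt) (fun v => Agrees (insert B O) x v ∧ v A = ahat)) :
    (condPr (bnDoJoint cpt A ahat) (Agrees {R} x) (Agrees (insert B O) x)
        = condPr (bnJoint cpt) (Agrees {R} x)
            (fun v => Agrees (insert B O) x v ∧ v A = ahat))
    ∧ (condPr (bnDoJoint cpt A ahat) (Agrees S' x) (Agrees (insert B O) x)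
        = condPr (bnJoint cpt) (Agrees S' x)
            (fun v => Agrees (insert B O) x v ∧ v A = ahat)) :=
  ⟨condPr_bnDoJoint_eq_condPr_bnJoint cpt (hlocal A) hActionSufficient hpos.ne' _,
    condPr_bnDoJoint_eq_condPr_bnJoint cpt (hlocal A) hActionSufficient hpos.ne' _⟩

/-- in a dynamic decision network `D` (two time slices, reward
`R` in the current slice, next-slice state variables `S'`, belief variable
`B`), if the observation signal `O` is action sufficient (all parents of the
action `A` lie in `O ∪ {B}`), then the conditional reward model equals the
interventional reward model, `P_D(R | O, B, A=â) = P_D(R | O, B, do(A=â))`,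
and the conditional transition model equals the interventional transition
model, `P_D(S' | O, B, A=â) = P_D(S' | O, B, do(A=â))`. -/
theorem ddn_reward_transition_obs_eq_do
    {ι : Type*} [Fintype ι] [DecidableEq ι]
    (Val : ι → Type*) [∀ i, Fintype (Val i)] [∀ i, DecidableEq (Val i)]
    (pa : ι → Finset ι) (ord : ι → ℕ)
    (hacyc : ∀ i j, j ∈ pa i → ord j < ord i)
    (cpt : ∀ i, (∀ j, Val j) → Val i → ℝ)
    (hlocal : ∀ i (v w : ∀ j, Val j), (∀ j ∈ pa i, v j = w j) → cpt i v = cpt i w)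
    (hnonneg : ∀ i (v : ∀ j, Val j) (x : Val i), 0 ≤ cpt i v x)
    (hsum : ∀ i (v : ∀ j, Val j), ∑ x : Val i, cpt i v x = 1)
    (slice : ι → Fin 2)
    (A R B : ι) (O S' : Finset ι)
    -- two-slice causal structure: edges respect the temporal order
    (htime : ∀ i j : ι, i ∈ pa j → ¬ (slice i = 1 ∧ slice j = 0))
    (hsliceA : slice A = 0) (hsliceR : slice R = 0) (hsliceB : slice B = 0)
    (hO : ∀ j ∈ O, slice j = 0) (hS' : ∀ j ∈ S', slice j = 1)
    (hAO : A ∉ O) (hAB : A ≠ B) (hARv : A ≠ R)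
    (hRO : R ∉ O) (hRB : R ≠ B)
    (hAS' : A ∉ S') (hS'dis : Disjoint S' (insert B O))
    -- action sufficiency: all parents of A lie in O ∪ {B}
    (hActionSufficient : pa A ⊆ insert B O)
    (x : ∀ i, Val i) (ahat : Val A)
    (hpos : 0 < prEvent (bnJoint cpt) (fun v => Agrees (insert B O) x v ∧ v A = ahat)) :
    (condPr (bnDoJoint cpt A ahat) (Agrees {R} x) (Agrees (insert B O) x)
        = condPr (bnJoint cpt) (Agrees {R} x)
            (fun v => Agrees (insert B O) x v ∧ v A = ahat))
    ∧ (condPr (bnDoJoint cpt A ahat) (Agrees S' x) (Agrees (insert B O) x)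
        = condPr (bnJoint cpt) (Agrees S' x)
            (fun v => Agrees (insert B O) x v ∧ v A = ahat)) :=
  ddn_reward_transition_obs_eq_do_general Val pa cpt hlocal A R B O S' hActionSufficient x ahat hpos
end

section
/- Let C be a probabilistic SCM in which the observation set O is action sufficient (every latent parent of the action A is a noise variable for A, all other parents of A are in O) and O contains no descendants of A. Then the posterior over the non-noise source variables U satisfies b(U | O = o, A = a) = b(U | O = o) for all actions a with positive probability, i.e., observing the action provides no additional information about the non-noise source variables beyond the observations. -/
open Finset
open scoped Classical

/-- Extend an assignment of the source variables to a full assignment. -/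
def extSrc {ι : Type*} [DecidableEq ι] {Val : ι → Type*} [∀ i, Inhabited (Val i)]
    (Src : Finset ι) (u : ∀ j : {j // j ∈ Src}, Val j) (i : ι) : Val i :=
  if h : i ∈ Src then u ⟨i, h⟩ else default

/-- Probability of an event under the product prior `b` on the source variables. -/
noncomputable def srcPr {ι : Type*} [DecidableEq ι] {Val : ι → Type*}
    [∀ i, Fintype (Val i)]
    (Src : Finset ι) (b : ∀ i, Val i → ℝ)
    (E : (∀ j : {j // j ∈ Src}, Val j) → Prop) : ℝ :=
  ∑ u : ∀ j : {j // j ∈ Src}, Val j,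
    if E u then ∏ j : {j // j ∈ Src}, b j.1 (u j) else 0

/-- Take the `UA`-coordinate from `u` and all other coordinates from `u'`. -/
noncomputable def mixFn {ι : Type*} {Val : ι → Type*} (Src : Finset ι) (UA : ι)
    (u u' : ∀ j : {j // j ∈ Src}, Val j) : ∀ j : {j // j ∈ Src}, Val j :=
  fun j => if j.1 = UA then u j else u' j

theorem mixFn_mixFn {ι : Type*} {Val : ι → Type*} (Src : Finset ι) (UA : ι)
    (u u' : ∀ j : {j // j ∈ Src}, Val j) :
    mixFn Src UA (mixFn Src UA u u') (mixFn Src UA u' u) = u := by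
  funext j
  by_cases hj : j.1 = UA <;> simp [mixFn, hj]

/-- in a probabilistic SCM where the observation set `O` is
action sufficient (every latent parent of the action `A` is the noise source
`U_A`, whose only child is `A`, and all other parents of `A` lie in `O`) and
`O` contains no descendants of `A`, the posterior over the non-noise source
variables is unchanged by observing the action:
`b(U | O = o, A = a) = b(U | O = o)` for all `a` with positive probability. -/
theorem scm_action_uninformative_for_sources
    {ι : Type*} [Fintype ι] [DecidableEq ι]
    (Val : ι → Type*) [∀ i, Fintype (Val i)] [∀ i, DecidableEq (Val i)]
    [∀ i, Inhabited (Val i)]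
    (pa : ι → Finset ι) (ord : ι → ℕ)
    (hacyc : ∀ i j, j ∈ pa i → ord j < ord i)
    (Src : Finset ι) (hsrc : ∀ i, i ∈ Src ↔ pa i = ∅)
    (f : ∀ i, (∀ j, Val j) → Val i)
    (hfloc : ∀ i, i ∉ Src → ∀ v w : ∀ j, Val j, (∀ j ∈ pa i, v j = w j) → f i v = f i w)
    (b : ∀ i, Val i → ℝ)
    (hb0 : ∀ i x, 0 ≤ b i x) (hb1 : ∀ j ∈ Src, ∑ x : Val j, b j x = 1)
    (F : (∀ i, Val i) → ∀ i, Val i)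
    (hFsrc : ∀ v, ∀ j ∈ Src, F v j = v j)
    (hFeq : ∀ v, ∀ i, i ∉ Src → F v i = f i (F v))
    (A : ι) (hASrc : A ∉ Src)
    (UA : ι) (hUASrc : UA ∈ Src)
    (hUAchild : ∀ j, UA ∈ pa j → j = A)
    (O : Finset ι) (hAO : A ∉ O)
    -- action sufficiency: every parent of A is U_A or lies in O
    (hpaA : ∀ j ∈ pa A, j = UA ∨ j ∈ O)
    -- O contains no descendants of A
    (hOnodesc : ∀ j ∈ O, ¬ Relation.TransGen (fun u w => u ∈ pa w) A j)
    (x : ∀ i, Val i) (a : Val A)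
    (hposO : 0 < srcPr Src b fun u => Agrees O x (F (extSrc Src u)))
    (hposOA : 0 < srcPr Src b fun u =>
        Agrees O x (F (extSrc Src u)) ∧ F (extSrc Src u) A = a) :
    srcPr Src b (fun u =>
        (Agrees O x (F (extSrc Src u)) ∧ F (extSrc Src u) A = a) ∧
          ∀ j : {j // j ∈ Src}, j.1 ≠ UA → u j = x j.1) /
      srcPr Src b (fun u =>
        Agrees O x (F (extSrc Src u)) ∧ F (extSrc Src u) A = a)
    = srcPr Src b (fun u =>
          Agrees O x (F (extSrc Src u)) ∧
            ∀ j : {j // j ∈ Src}, j.1 ≠ UA → u j = x j.1) /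
        srcPr Src b (fun u => Agrees O x (F (extSrc Src u))) := by
  classical
  set R : ι → ι → Prop := fun u w => u ∈ pa w with hRdef
  -- F on source coordinates
  have h1 : ∀ (u : ∀ j : {j // j ∈ Src}, Val j) (j : ι) (hj : j ∈ Src),
      F (extSrc Src u) j = u ⟨j, hj⟩ := by
    intro u j hj
    rw [hFsrc _ j hj, extSrc, dif_pos hj]
  -- first-step decomposition of ancestry from UA
  have hanc : ∀ j, Relation.TransGen R UA j → j = A ∨ Relation.TransGen R A j := by
    intro j h
    induction h with
    | single h => exact Or.inl (hUAchild _ h)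
    | tail _ h ih =>
      rcases ih with rfl | ih
      · exact Or.inr (Relation.TransGen.single h)
      · exact Or.inr (ih.tail h)
  have hOanc : ∀ j ∈ O, ¬ Relation.TransGen R UA j := by
    intro j hj h
    rcases hanc j h with rfl | h
    · exact hAO hj
    · exact hOnodesc j hj h
  -- F at non-descendants of UA does not depend on the UA-coordinate
  have L1 : ∀ n i, ord i < n → ¬ Relation.TransGen R UA i → i ≠ UA →
      ∀ v w : ∀ k, Val k, (∀ k ∈ Src, k ≠ UA → v k = w k) → F v i = F w i := by
    intro n
    induction n with
    | zero => intro i hi; omega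
    | succ n ih =>
      intro i hi hnanc hne v w hvw
      by_cases hiS : i ∈ Src
      · rw [hFsrc v i hiS, hFsrc w i hiS]
        exact hvw i hiS hne
      · rw [hFeq v i hiS, hFeq w i hiS]
        apply hfloc i hiS
        intro j hj
        have hjne : j ≠ UA := by
          rintro rfl
          exact hnanc (Relation.TransGen.single hj)
        have hjnanc : ¬ Relation.TransGen R UA j := fun h => hnanc (h.tail hj)
        exact ih j (by have := hacyc i j hj; omega) hjnanc hjne v w hvw
  -- key lemma about mixing
  have hmixkey : ∀ u u' : ∀ j : {j // j ∈ Src}, Val j,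
      Agrees O x (F (extSrc Src u)) → Agrees O x (F (extSrc Src u')) →
      Agrees O x (F (extSrc Src (mixFn Src UA u u'))) ∧
        F (extSrc Src (mixFn Src UA u u')) A = F (extSrc Src u) A := by
    intro u u' hu hu'
    have hrest : ∀ k ∈ Src, k ≠ UA → extSrc Src (mixFn Src UA u u') k = extSrc Src u' k := by
      intro k hk hkne
      rw [extSrc, extSrc, dif_pos hk, dif_pos hk]
      simp [mixFn, hkne]
    have hOagree : Agrees O x (F (extSrc Src (mixFn Src UA u u'))) := by
      intro j hj
      by_cases hje : j = UA
      · subst hje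
        rw [h1 _ j hUASrc]
        have : u ⟨j, hUASrc⟩ = F (extSrc Src u) j := (h1 u j hUASrc).symm
        simp only [mixFn, if_pos rfl]
        rw [this]
        exact hu j hj
      · rw [L1 (ord j + 1) j (Nat.lt_succ_self _) (hOanc j hj) hje _ _ hrest]
        exact hu' j hj
    refine ⟨hOagree, ?_⟩
    rw [hFeq _ A hASrc, hFeq _ A hASrc]
    apply hfloc A hASrc
    intro j hj
    rcases hpaA j hj with rfl | hjo
    · rw [h1 _ j hUASrc, h1 _ j hUASrc]
      simp [mixFn]
    · rw [hOagree j hjo, hu j hjo]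
  -- event equivalence under the swap
  have hiff : ∀ u u' : ∀ j : {j // j ∈ Src}, Val j,
      (((Agrees O x (F (extSrc Src u)) ∧ F (extSrc Src u) A = a) ∧
          ∀ j : {j // j ∈ Src}, j.1 ≠ UA → u j = x j.1) ∧
        Agrees O x (F (extSrc Src u'))) ↔
      ((Agrees O x (F (extSrc Src (mixFn Src UA u' u))) ∧
          ∀ j : {j // j ∈ Src}, j.1 ≠ UA → mixFn Src UA u' u j = x j.1) ∧
        (Agrees O x (F (extSrc Src (mixFn Src UA u u'))) ∧
          F (extSrc Src (mixFn Src UA u u')) A = a)) := by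
    intro u u'
    constructor
    · rintro ⟨⟨⟨hOu, hAu⟩, hru⟩, hOu'⟩
      obtain ⟨hOm, hAm⟩ := hmixkey u u' hOu hOu'
      obtain ⟨hOm', -⟩ := hmixkey u' u hOu' hOu
      refine ⟨⟨hOm', ?_⟩, hOm, hAm.trans hAu⟩
      intro j hj
      simp only [mixFn, if_neg hj]
      exact hru j hj
    · rintro ⟨⟨hOw', hrw'⟩, hOw, hAw⟩
      obtain ⟨hOu, hAu⟩ := hmixkey (mixFn Src UA u u') (mixFn Src UA u' u) hOw hOw'
      rw [mixFn_mixFn] at hOu hAu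
      obtain ⟨hOu', -⟩ := hmixkey (mixFn Src UA u' u) (mixFn Src UA u u') hOw' hOw
      rw [mixFn_mixFn] at hOu'
      refine ⟨⟨⟨hOu, hAu.trans hAw⟩, ?_⟩, hOu'⟩
      intro j hj
      have := hrw' j hj
      simpa only [mixFn, if_neg hj] using this
  -- weight preservation
  have hwt : ∀ u u' : ∀ j : {j // j ∈ Src}, Val j,
      (∏ j : {j // j ∈ Src}, b j.1 (u j)) * ∏ j : {j // j ∈ Src}, b j.1 (u' j) =
      (∏ j : {j // j ∈ Src}, b j.1 (mixFn Src UA u' u j)) *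
        ∏ j : {j // j ∈ Src}, b j.1 (mixFn Src UA u u' j) := by
    intro u u'
    rw [← Finset.prod_mul_distrib, ← Finset.prod_mul_distrib]
    apply Finset.prod_congr rfl
    intro j _
    by_cases hj : j.1 = UA <;> simp [mixFn, hj, mul_comm]
  -- product of probabilities as a sum over pairs
  have expand : ∀ (f g : (∀ j : {j // j ∈ Src}, Val j) → ℝ),
      (∑ u : ∀ j : {j // j ∈ Src}, Val j, f u) *
        (∑ u : ∀ j : {j // j ∈ Src}, Val j, g u) =
      ∑ p : (∀ j : {j // j ∈ Src}, Val j) × (∀ j : {j // j ∈ Src}, Val j),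
        f p.1 * g p.2 := by
    intro f g
    rw [Fintype.sum_prod_type, Finset.sum_mul_sum]
  -- the involution on pairs
  have hinv : Function.Involutive
      (fun p : (∀ j : {j // j ∈ Src}, Val j) × (∀ j : {j // j ∈ Src}, Val j) =>
        (mixFn Src UA p.2 p.1, mixFn Src UA p.1 p.2)) := by
    intro p
    simp only
    rw [mixFn_mixFn, mixFn_mixFn]
  -- cross-multiplication identity
  rw [div_eq_div_iff hposOA.ne' hposO.ne']
  unfold srcPr
  rw [expand, expand]
  apply Fintype.sum_equiv hinv.toPerm
  intro p
  obtain ⟨u, u'⟩ := p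
  rw [show (Function.Involutive.toPerm _ hinv) (u, u') = (mixFn Src UA u' u, mixFn Src UA u u') from rfl]
  by_cases hE : ((Agrees O x (F (extSrc Src u)) ∧ F (extSrc Src u) A = a) ∧
      ∀ j : {j // j ∈ Src}, j.1 ≠ UA → u j = x j.1) ∧ Agrees O x (F (extSrc Src u'))
  · obtain ⟨h3, h2⟩ := (hiff u u').mp hE
    rw [if_pos hE.1, if_pos hE.2, if_pos h3, if_pos h2]
    exact hwt u u'
  · have hE' : ¬ ((Agrees O x (F (extSrc Src (mixFn Src UA u' u))) ∧
        ∀ j : {j // j ∈ Src}, j.1 ≠ UA → mixFn Src UA u' u j = x j.1) ∧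
        (Agrees O x (F (extSrc Src (mixFn Src UA u u'))) ∧
          F (extSrc Src (mixFn Src UA u u')) A = a)) :=
      fun h => hE ((hiff u u').mpr h)
    rcases not_and_or.mp hE with h | h <;> rcases not_and_or.mp hE' with h' | h' <;>
      rw [if_neg h, if_neg h'] <;>
      simp only [zero_mul, mul_zero]
end
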